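/- Let λ > 0 and suppose h : J → ℝ is C¹ with |h'| ≤ e^{−λn} on an interval J, and ρ : h(J) → ℂ satisfies H(ρ) ≤ a. Suppose also H(h') ≤ D, i.e., |h'(x)|/|h'(y)| ≤ e^{D|x−y|^α}. Then the function ρ̃ = (ρ∘h)·h' satisfies H(ρ̃) ≤ D + e^{−λαn}·a. -/

import Mathlib

/-! The logarithm turns the product `(ρ ∘ h) · h'` into a sum, so the Hölder constants of
`log ‖ρ ∘ h‖` and `log |h'|` add. The distortion bound on `h'` gives the constant `D` for the
second summand, and since `h` contracts distances by `e^{-λn}`, the `α`-Hölder constant `a` of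
`log ‖ρ‖` becomes `e^{-λαn} a` after composing with `h`. -/

open Real

/-- The bound `H(f) ≤ C` on `s`, stated for the modulus `f = ‖g ·‖` of a function `g`. -/
def LogHolderWith {X : Type*} [PseudoMetricSpace X] (C α : ℝ) (s : Set X) (f : X → ℝ) : Prop :=
  ∀ x ∈ s, ∀ y ∈ s, |log (f x) - log (f y)| ≤ C * dist x y ^ α

namespace LogHolderWith

variable {X Y : Type*} [PseudoMetricSpace X] [PseudoMetricSpace Y] {α : ℝ} {s : Set X}

theorem of_le_exp_mul {C : ℝ} {f : X → ℝ} (hf : ∀ x ∈ s, 0 < f x)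
    (hdist : ∀ x ∈ s, ∀ y ∈ s, f x ≤ exp (C * dist x y ^ α) * f y) :
    LogHolderWith C α s f := by
  have log_sub_le : ∀ x ∈ s, ∀ y ∈ s, log (f x) - log (f y) ≤ C * dist x y ^ α := by
    intro x hx y hy
    have := log_le_log (hf x hx) (hdist x hx y hy)
    rw [log_mul (exp_ne_zero _) (hf y hy).ne', log_exp] at this
    linarith
  intro x hx y hy
  rw [abs_sub_le_iff]
  exact ⟨log_sub_le x hx y hy, dist_comm x y ▸ log_sub_le y hy x hx⟩

theorem mul {a b : ℝ} {f g : X → ℝ} (hf : LogHolderWith a α s f) (hg : LogHolderWith b α s g)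
    (hf₀ : ∀ x ∈ s, f x ≠ 0) (hg₀ : ∀ x ∈ s, g x ≠ 0) :
    LogHolderWith (a + b) α s (f * g) := by
  intro x hx y hy
  simp only [Pi.mul_apply]
  rw [log_mul (hf₀ x hx) (hg₀ x hx), log_mul (hf₀ y hy) (hg₀ y hy)]
  calc |log (f x) + log (g x) - (log (f y) + log (g y))|
      = |(log (f x) - log (f y)) + (log (g x) - log (g y))| := by ring_nf
    _ ≤ |log (f x) - log (f y)| + |log (g x) - log (g y)| := abs_add_le _ _
    _ ≤ a * dist x y ^ α + b * dist x y ^ α := add_le_add (hf x hx y hy) (hg x hx y hy)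
    _ = (a + b) * dist x y ^ α := by ring

theorem comp {a K : ℝ} {f : Y → ℝ} {h : X → Y} (hf : LogHolderWith a α (h '' s) f)
    (ha : 0 ≤ a) (hα : 0 ≤ α) (hK : 0 ≤ K)
    (hh : ∀ x ∈ s, ∀ y ∈ s, dist (h x) (h y) ≤ K * dist x y) :
    LogHolderWith (a * K ^ α) α s (f ∘ h) := by
  intro x hx y hy
  calc |log (f (h x)) - log (f (h y))|
      ≤ a * dist (h x) (h y) ^ α := hf _ ⟨x, hx, rfl⟩ _ ⟨y, hy, rfl⟩
    _ ≤ a * (K * dist x y) ^ α := by gcongr; exact hh x hx y hy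
    _ = a * K ^ α * dist x y ^ α := by rw [mul_rpow hK dist_nonneg, mul_assoc]

end LogHolderWith

theorem stmt_13_general (α a D lam : ℝ) (n : ℕ) (J : Set ℝ) (h h' : ℝ → ℝ) (ρ : ℝ → ℂ)
    (hα : α ∈ Set.Ioo (0:ℝ) 1) (ha : 0 < a)
    (hne : ∀ x ∈ J, h' x ≠ 0)
    (hcontr : ∀ x ∈ J, ∀ y ∈ J, |h x - h y| ≤ Real.exp (-lam * n) * |x - y|)
    (hdist : ∀ x ∈ J, ∀ y ∈ J, |h' x| ≤ Real.exp (D * |x - y| ^ α) * |h' y|)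
    (hρne : ∀ u ∈ h '' J, ρ u ≠ 0)
    (hρH : ∀ u ∈ h '' J, ∀ v ∈ h '' J,
      |Real.log (‖ρ u‖) - Real.log (‖ρ v‖)| ≤ a * |u - v| ^ α) :
    ∀ x ∈ J, ∀ y ∈ J,
      |Real.log (‖ρ (h x)‖ * |h' x|) - Real.log (‖ρ (h y)‖ * |h' y|)|
        ≤ (D + Real.exp (-lam * α * n) * a) * |x - y| ^ α := by
  have hρh : LogHolderWith (a * exp (-lam * n) ^ α) α J (fun x ↦ ‖ρ (h x)‖) :=
    LogHolderWith.comp (f := fun u ↦ ‖ρ u‖) (by simpa only [LogHolderWith, Real.dist_eq] using hρH)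
      ha.le hα.1.le (exp_pos _).le (by simpa only [Real.dist_eq] using hcontr)
  have hh' : LogHolderWith D α J (fun x ↦ |h' x|) :=
    .of_le_exp_mul (fun x hx ↦ abs_pos.2 (hne x hx)) (by simpa only [Real.dist_eq] using hdist)
  have hprod := hh'.mul hρh (fun x hx ↦ (abs_pos.2 (hne x hx)).ne')
    (fun x hx ↦ norm_ne_zero_iff.2 (hρne _ ⟨x, hx, rfl⟩))
  have hconst : a * exp (-lam * n) ^ α = exp (-lam * α * n) * a := by
    rw [← exp_mul, mul_comm a]; ring_nf
  intro x hx y hy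
  simpa only [Pi.mul_apply, Real.dist_eq, hconst, mul_comm (|h' _|)] using hprod x hx y hy

theorem stmt_13 (α a D lam : ℝ) (n : ℕ) (J : Set ℝ) (h h' : ℝ → ℝ) (ρ : ℝ → ℂ)
    (hα : α ∈ Set.Ioo (0:ℝ) 1) (ha : 0 < a) (hD : 0 ≤ D) (hlam : 0 < lam)
    (hderiv : ∀ x ∈ J, HasDerivAt h (h' x) x)
    (hne : ∀ x ∈ J, h' x ≠ 0)
    (hbd : ∀ x ∈ J, |h' x| ≤ Real.exp (-lam * n))
    (hcontr : ∀ x ∈ J, ∀ y ∈ J, |h x - h y| ≤ Real.exp (-lam * n) * |x - y|)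
    (hdist : ∀ x ∈ J, ∀ y ∈ J, |h' x| ≤ Real.exp (D * |x - y| ^ α) * |h' y|)
    (hρne : ∀ u ∈ h '' J, ρ u ≠ 0)
    (hρH : ∀ u ∈ h '' J, ∀ v ∈ h '' J,
      |Real.log (‖ρ u‖) - Real.log (‖ρ v‖)| ≤ a * |u - v| ^ α) :
    ∀ x ∈ J, ∀ y ∈ J,
      |Real.log (‖ρ (h x)‖ * |h' x|) - Real.log (‖ρ (h y)‖ * |h' y|)|
        ≤ (D + Real.exp (-lam * α * n) * a) * |x - y| ^ α :=
  stmt_13_general α a D lam n J h h' ρ hα ha hne hcontr hdist hρne hρH
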